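/- arXiv:1907.09826 — 2 statements merged into one kernel-verified Lean document; each statement's English description precedes it below -/
import Mathlib

section
/- Let F be a strongly convex Minkowski norm on ℝ^m and let ℓ be its Legendre map. Then there exists a constant c > 0 such that for all v₁, v₂ ∈ ℝ^m one has (ℓ(v₂) − ℓ(v₁))[v₂ − v₁] ≥ c‖v₂ − v₁‖² (strong monotonicity of the Legendre map, including the degenerate case in which the segment from v₁ to v₂ passes through the origin). -/
/-! `F²` is positively homogeneous of degree 2, so its derivative `2ℓ` is homogeneous of degree 1
and its Hessian `2g` of degree 0; by compactness of the unit sphere there is `c > 0` with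
`g_v(w, w) ≥ c‖w‖²` for all `v ≠ 0`. Along a segment from `v` to `v + u` avoiding the origin, the
mean value theorem for `t ↦ ℓ(v + t u) u` gives `(ℓ(v + u) - ℓ(v)) u = g_ξ(u, u) ≥ c‖u‖²`. If the
segment passes through the origin, then `v = -t u` and `v + u = (1 - t) u` with `t ∈ [0, 1]`, and
homogeneity of `ℓ` with Euler's identity `ℓ(w) w = F(w)² = g_w(w, w)` turn the left side into
`(1 - t) F(u)² + t F(-u)² ≥ c‖u‖²`. -/

open scoped Topology Classical
open MeasureTheory
noncomputable section

/-- One half of the second Fréchet derivative of `F²` at `v`, evaluated on `(w₁, w₂)`: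
the fundamental tensor of `F`. -/
def fundTensor {V : Type*} [NormedAddCommGroup V] [NormedSpace ℝ V]
    (F : V → ℝ) (v w₁ w₂ : V) : ℝ :=
  (1 / 2) * fderiv ℝ (fderiv ℝ (fun u => (F u) ^ 2)) v w₁ w₂

/-- A strongly convex Minkowski norm on a real normed space. -/
structure IsMinkowskiNorm {V : Type*} [NormedAddCommGroup V] [NormedSpace ℝ V]
    (F : V → ℝ) : Prop where
  continuous : Continuous F
  map_zero : F 0 = 0
  pos : ∀ v : V, v ≠ 0 → 0 < F v
  homog : ∀ lam : ℝ, 0 < lam → ∀ v : V, F (lam • v) = lam * F v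
  smooth : ContDiffOn ℝ 2 F {0}ᶜ
  symm : ∀ v : V, v ≠ 0 → ∀ w₁ w₂ : V, fundTensor F v w₁ w₂ = fundTensor F v w₂ w₁
  posdef : ∀ v : V, v ≠ 0 → ∀ w : V, w ≠ 0 → 0 < fundTensor F v w w

/-- The Legendre map of `F`: `ℓ(v) = (1/2) D(F²)(v)` for `v ≠ 0`, and `ℓ(0) = 0`. -/
def legendre {V : Type*} [NormedAddCommGroup V] [NormedSpace ℝ V]
    (F : V → ℝ) (v : V) : V →L[ℝ] ℝ :=
  if v = 0 then 0 else (1 / 2 : ℝ) • fderiv ℝ (fun u => (F u) ^ 2) v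

/-- The dual co-Finsler norm `F^*(ω) = sup {ω v : F v = 1}`. -/
def dualNorm {V : Type*} [NormedAddCommGroup V] [NormedSpace ℝ V]
    (F : V → ℝ) (ω : V →L[ℝ] ℝ) : ℝ :=
  sSup ((fun v => ω v) '' {v | F v = 1})

section Homogeneous

variable {E W : Type*} [NormedAddCommGroup E] [NormedSpace ℝ E]
  [NormedAddCommGroup W] [NormedSpace ℝ W]

def IsPosHomogeneous (k : ℕ) (g : E → W) : Prop :=
  ∀ a : ℝ, 0 < a → ∀ u, g (a • u) = a ^ k • g u

namespace IsPosHomogeneous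

variable {k : ℕ} {g : E → W}

theorem map_zero (h : IsPosHomogeneous (k + 1) g) : g 0 = 0 := by
  have h2 : (2 ^ (k + 1) - 1 : ℝ) • g 0 = 0 := by
    rw [sub_smul, one_smul, ← h 2 two_pos, smul_zero, sub_self]
  refine (smul_eq_zero.mp h2).resolve_left ?_
  have : (2 : ℝ) ≤ 2 ^ (k + 1) := le_self_pow₀ one_le_two k.succ_ne_zero
  linarith

theorem fderiv (h : IsPosHomogeneous (k + 1) g) : IsPosHomogeneous k (_root_.fderiv ℝ g) := by
  intro a ha u
  have key : a • _root_.fderiv ℝ g (a • u) = a • a ^ k • _root_.fderiv ℝ g u := by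
    rw [← fderiv_comp_smul, smul_smul, ← pow_succ', ← Pi.smul_apply, ← fderiv_const_smul_field]
    congr 1
    funext x
    exact h a ha x
  exact smul_right_injective _ ha.ne' key

theorem fderiv_apply_self (h : IsPosHomogeneous k g) {v : E} (hg : DifferentiableAt ℝ g v) :
    _root_.fderiv ℝ g v v = (k : ℝ) • g v := by
  have hline : HasDerivAt (fun t : ℝ => g (t • v)) (_root_.fderiv ℝ g v v) 1 := by
    have hg' : HasFDerivAt g (_root_.fderiv ℝ g v) ((1 : ℝ) • v) := by
      rw [one_smul]; exact hg.hasFDerivAt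
    exact hg'.comp_hasDerivAt 1 (by simpa using (hasDerivAt_id (1 : ℝ)).smul_const v)
  have hpow : HasDerivAt (fun t : ℝ => t ^ k • g v) ((k : ℝ) • g v) 1 := by
    simpa using (hasDerivAt_pow k (1 : ℝ)).smul_const (g v)
  have heq : (fun t : ℝ => g (t • v)) =ᶠ[𝓝 1] fun t => t ^ k • g v := by
    filter_upwards [Ioi_mem_nhds one_pos] with t ht
    exact h t ht v
  exact hline.unique (hpow.congr_of_eventuallyEq heq)

end IsPosHomogeneous

end Homogeneous

namespace IsMinkowskiNorm

variable {V : Type*} [NormedAddCommGroup V] [NormedSpace ℝ V] {F : V → ℝ}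

theorem isPosHomogeneous_sq (hF : IsMinkowskiNorm F) :
    IsPosHomogeneous 2 (fun u => F u ^ 2) := by
  intro a ha u
  simp only [hF.homog a ha, smul_eq_mul]
  ring

theorem contDiffAt_sq (hF : IsMinkowskiNorm F) {v : V} (hv : v ≠ 0) :
    ContDiffAt ℝ 2 (fun u => F u ^ 2) v :=
  (hF.smooth.pow 2).contDiffAt (isOpen_compl_singleton.mem_nhds hv)

theorem differentiableAt_fderiv_sq (hF : IsMinkowskiNorm F) {v : V} (hv : v ≠ 0) :
    DifferentiableAt ℝ (fderiv ℝ fun u => F u ^ 2) v :=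
  ((hF.contDiffAt_sq hv).fderiv_right (m := 1) le_rfl).differentiableAt one_ne_zero

theorem continuousAt_fderiv_fderiv_sq (hF : IsMinkowskiNorm F) {v : V} (hv : v ≠ 0) :
    ContinuousAt (fderiv ℝ (fderiv ℝ fun u => F u ^ 2)) v :=
  (((hF.contDiffAt_sq hv).fderiv_right (m := 1) le_rfl).fderiv_right (m := 0) le_rfl).continuousAt

theorem fderiv_sq_apply_self (hF : IsMinkowskiNorm F) {v : V} (hv : v ≠ 0) :
    fderiv ℝ (fun u => F u ^ 2) v v = 2 * F v ^ 2 := by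
  simpa using hF.isPosHomogeneous_sq.fderiv_apply_self
    ((hF.contDiffAt_sq hv).differentiableAt two_ne_zero)

theorem fundTensor_smul (hF : IsMinkowskiNorm F) {a : ℝ} (ha : 0 < a) (v : V) :
    fundTensor F (a • v) = fundTensor F v := by
  funext w₁ w₂
  simp only [fundTensor, hF.isPosHomogeneous_sq.fderiv.fderiv a ha v, pow_zero, one_smul]

theorem fundTensor_self (hF : IsMinkowskiNorm F) {v : V} (hv : v ≠ 0) :
    fundTensor F v v v = F v ^ 2 := by
  have h := hF.isPosHomogeneous_sq.fderiv.fderiv_apply_self (hF.differentiableAt_fderiv_sq hv)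
  rw [fundTensor, h, Nat.cast_one, one_smul, hF.fderiv_sq_apply_self hv]
  ring

theorem legendre_eq (hF : IsMinkowskiNorm F) (v : V) :
    legendre F v = (1 / 2 : ℝ) • fderiv ℝ (fun u => F u ^ 2) v := by
  rcases eq_or_ne v 0 with rfl | hv
  · rw [legendre, if_pos rfl, hF.isPosHomogeneous_sq.fderiv.map_zero, smul_zero]
  · exact if_neg hv

theorem legendre_smul (hF : IsMinkowskiNorm F) {a : ℝ} (ha : 0 ≤ a) (v : V) :
    legendre F (a • v) = a • legendre F v := by
  rcases ha.eq_or_lt with rfl | ha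
  · simp [legendre]
  · rw [hF.legendre_eq, hF.legendre_eq, hF.isPosHomogeneous_sq.fderiv a ha v, pow_one,
      smul_comm]

theorem legendre_apply_self (hF : IsMinkowskiNorm F) (v : V) : legendre F v v = F v ^ 2 := by
  rcases eq_or_ne v 0 with rfl | hv
  · simp [legendre, hF.map_zero]
  · rw [hF.legendre_eq, smul_apply, hF.fderiv_sq_apply_self hv, smul_eq_mul]
    ring

theorem exists_pos_mul_sq_le_fundTensor [ProperSpace V] (hF : IsMinkowskiNorm F) :
    ∃ c > 0, ∀ v w : V, v ≠ 0 → c * ‖w‖ ^ 2 ≤ fundTensor F v w w := by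
  set S := Metric.sphere (0 : V) 1
  have hS : ∀ x ∈ S, x ≠ 0 := fun x hx => ne_zero_of_mem_unit_sphere ⟨x, hx⟩
  have hcont : ContinuousOn (fun p : V × V => fundTensor F p.1 p.2 p.2) (S ×ˢ S) := by
    intro p hp
    have := hF.continuousAt_fderiv_fderiv_sq (hS _ hp.1)
    unfold fundTensor
    fun_prop
  obtain ⟨c, hc, hmin⟩ := ((isCompact_sphere 0 1).prod (isCompact_sphere 0 1)).exists_forall_le'
    hcont (a := 0) fun p hp => hF.posdef _ (hS _ hp.1) _ (hS _ hp.2)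
  refine ⟨c, hc, fun v w hv => ?_⟩
  rcases eq_or_ne w 0 with rfl | hw
  · simp [fundTensor]
  have hunit : ∀ x : V, x ≠ 0 → ‖x‖⁻¹ • x ∈ S := fun x hx => by
    simp [S, norm_smul, inv_mul_cancel₀ (norm_ne_zero_iff.mpr hx)]
  have hrescale : fundTensor F v w w =
      ‖w‖ ^ 2 * fundTensor F (‖v‖⁻¹ • v) (‖w‖⁻¹ • w) (‖w‖⁻¹ • w) := by
    rw [hF.fundTensor_smul (inv_pos.mpr (norm_pos_iff.mpr hv))]
    simp only [fundTensor, map_smul, smul_apply, smul_eq_mul]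
    field_simp
  rw [hrescale, mul_comm]
  exact mul_le_mul_of_nonneg_left (hmin (_, _) ⟨hunit v hv, hunit w hw⟩) (sq_nonneg _)

theorem mul_sq_le_sq {c : ℝ} (hF : IsMinkowskiNorm F)
    (hc : ∀ v w : V, v ≠ 0 → c * ‖w‖ ^ 2 ≤ fundTensor F v w w) (v : V) :
    c * ‖v‖ ^ 2 ≤ F v ^ 2 := by
  rcases eq_or_ne v 0 with rfl | hv
  · simp [hF.map_zero]
  · exact hF.fundTensor_self hv ▸ hc v v hv

theorem mul_sq_le_legendre_sub_apply_of_forall_add_smul_ne_zero {c : ℝ} (hF : IsMinkowskiNorm F)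
    (hc : ∀ v w : V, v ≠ 0 → c * ‖w‖ ^ 2 ≤ fundTensor F v w w) {v u : V}
    (hseg : ∀ t ∈ Set.Icc (0 : ℝ) 1, v + t • u ≠ 0) :
    c * ‖u‖ ^ 2 ≤ (legendre F (v + u) - legendre F v) u := by
  set T := fderiv ℝ fun x => F x ^ 2
  have hline : ∀ t : ℝ, HasDerivAt (fun s : ℝ => v + s • u) u t := fun t => by
    simpa using ((hasDerivAt_id t).smul_const u).const_add v
  have hderiv : ∀ t ∈ Set.Ioo (0 : ℝ) 1,
      HasDerivAt (fun s : ℝ => T (v + s • u) u) (fderiv ℝ T (v + t • u) u u) t := by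
    intro t ht
    have hT := (hF.differentiableAt_fderiv_sq (hseg t (Set.Ioo_subset_Icc_self ht))).hasFDerivAt
    have h1 : HasDerivAt (fun s : ℝ => T (v + s • u)) (fderiv ℝ T (v + t • u) u) t :=
      hT.comp_hasDerivAt t (hline t)
    simpa using h1.clm_apply (hasDerivAt_const t u)
  have hcont : ContinuousOn (fun s : ℝ => T (v + s • u) u) (Set.Icc 0 1) := by
    intro t ht
    have hT := (hF.differentiableAt_fderiv_sq (hseg t ht)).continuousAt
    have h1 : ContinuousAt (fun s : ℝ => T (v + s • u)) t :=
      hT.comp_of_eq (hline t).continuousAt rfl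
    exact (h1.clm_apply continuousAt_const).continuousWithinAt
  obtain ⟨ξ, hξ, hslope⟩ := exists_hasDerivAt_eq_slope _ _ zero_lt_one hcont hderiv
  have hbound := hc _ u (hseg ξ (Set.Ioo_subset_Icc_self hξ))
  rw [fundTensor] at hbound
  rw [sub_apply, hF.legendre_eq, hF.legendre_eq, smul_apply, smul_apply, smul_eq_mul, smul_eq_mul]
  simp only [one_smul, zero_smul, add_zero, sub_zero, div_one] at hslope
  linarith

theorem mul_sq_le_legendre_sub_apply_of_add_smul_eq_zero {c : ℝ} (hF : IsMinkowskiNorm F)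
    (hc : ∀ v : V, c * ‖v‖ ^ 2 ≤ F v ^ 2) {v u : V} {t : ℝ} (ht : t ∈ Set.Icc (0 : ℝ) 1)
    (h0 : v + t • u = 0) :
    c * ‖u‖ ^ 2 ≤ (legendre F (v + u) - legendre F v) u := by
  have hv : v = t • -u := by rw [smul_neg]; exact eq_neg_of_add_eq_zero_left h0
  have hvu : v + u = (1 - t) • u := by rw [hv, sub_smul, one_smul, smul_neg]; abel
  have hneg : legendre F (-u) u = -F (-u) ^ 2 := by
    rw [← hF.legendre_apply_self, ← map_neg, neg_neg]
  have hval : (legendre F (v + u) - legendre F v) u = (1 - t) * F u ^ 2 + t * F (-u) ^ 2 := by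
    rw [hvu, hv, sub_apply, hF.legendre_smul (sub_nonneg.mpr ht.2), hF.legendre_smul ht.1,
      smul_apply, smul_apply, hF.legendre_apply_self, hneg, smul_eq_mul, smul_eq_mul]
    ring
  have hbound_neg := hc (-u)
  rw [norm_neg] at hbound_neg
  rw [hval]
  nlinarith [hc u, ht.1, ht.2]

end IsMinkowskiNorm

theorem legendre_strongly_monotone_general
    {m : ℕ} (F : EuclideanSpace ℝ (Fin m) → ℝ)
    (hF : IsMinkowskiNorm F) :
    ∃ c : ℝ, 0 < c ∧ ∀ v₁ v₂ : EuclideanSpace ℝ (Fin m),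
      c * ‖v₂ - v₁‖ ^ 2 ≤ (legendre F v₂ - legendre F v₁) (v₂ - v₁) := by
  obtain ⟨c, hc, hg⟩ := hF.exists_pos_mul_sq_le_fundTensor
  refine ⟨c, hc, fun v₁ v₂ => ?_⟩
  obtain ⟨u, rfl⟩ : ∃ u, v₂ = v₁ + u := ⟨v₂ - v₁, by abel⟩
  rw [add_sub_cancel_left]
  by_cases hdeg : ∃ t ∈ Set.Icc (0 : ℝ) 1, v₁ + t • u = 0
  · obtain ⟨t, ht, h0⟩ := hdeg
    exact hF.mul_sq_le_legendre_sub_apply_of_add_smul_eq_zero (hF.mul_sq_le_sq hg) ht h0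
  · push Not at hdeg
    exact hF.mul_sq_le_legendre_sub_apply_of_forall_add_smul_ne_zero hg hdeg

/-- strong monotonicity of the Legendre map of a strongly convex Minkowski
norm, on all of `ℝ^m` (including segments through the origin). -/
theorem legendre_strongly_monotone
    {m : ℕ} (hm : 2 ≤ m) (F : EuclideanSpace ℝ (Fin m) → ℝ)
    (hF : IsMinkowskiNorm F) :
    ∃ c : ℝ, 0 < c ∧ ∀ v₁ v₂ : EuclideanSpace ℝ (Fin m),
      c * ‖v₂ - v₁‖ ^ 2 ≤ (legendre F v₂ - legendre F v₁) (v₂ - v₁) :=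
  legendre_strongly_monotone_general F hF
end
end

section
/- (Averaged Riemannian metric, pointwise version.) Let m ≥ 2 and let F be a strongly convex Minkowski norm on ℝ^m, with fundamental tensor g. Let S := { y ∈ ℝ^m : F(y) = 1 } be the indicatrix and let λ denote the (m−1)-dimensional Hausdorff measure on ℝ^m restricted to S. Then 0 < λ(S) < ∞, for all u, v ∈ ℝ^m the function y ↦ g_y(u, v) is λ-integrable on S, and h(u, v) := ( ∫_S g_y(u, v) dλ(y) ) / λ(S) defines a symmetric positive definite bilinear form (an inner product) on ℝ^m. -/
open scoped Topology Classical
open MeasureTheory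
noncomputable section

/-!
The indicatrix `S = {F = 1}` is compact and avoids `0`, so the fundamental tensor is continuous,
hence integrable, on `S`, and the averaged form inherits symmetry, bilinearity and positivity
from the pointwise ones. The real work is `0 < μH[m-1] S < ∞`. Every nonzero vector is a positive
multiple of a point on a face of the cube `[-1, 1]^m`, so `S` is covered by the images of the
`2m` faces under the radial projection `v ↦ v / F v`; this map is `C¹` away from `0`, hence
Lipschitz on each face, and a face has finite `(m-1)`-dimensional measure. Conversely, forgetting
the last coordinate is `1`-Lipschitz and, by the intermediate value theorem along vertical lines,
maps `S` onto a neighbourhood of `0` in `ℝ^(m-1)`, which has positive volume.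
-/

open Set Metric

lemma hausdorffMeasure_fin_eq_volume {n : ℕ} :
    (μH[(n : ℝ)] : Measure (Fin n → ℝ)) = volume := by
  simpa using hausdorffMeasure_pi_real (ι := Fin n)

lemma hausdorffMeasure_image_lt_top_of_contDiffOn {E G : Type*} [NormedAddCommGroup E]
    [NormedSpace ℝ E] [MeasurableSpace E] [BorelSpace E] [NormedAddCommGroup G]
    [NormedSpace ℝ G] [MeasurableSpace G] [BorelSpace G] {f : E → G} {s : Set E} {d : ℝ}
    (hd : 0 ≤ d) (hf : ContDiffOn ℝ 1 f s) (hconv : Convex ℝ s) (hcomp : IsCompact s)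
    (hs : μH[d] s < ⊤) : μH[d] (f '' s) < ⊤ := by
  obtain ⟨K, hK⟩ := hf.exists_lipschitzOnWith one_ne_zero hconv hcomp
  exact (hK.hausdorffMeasure_image_le hd).trans_lt
    (ENNReal.mul_lt_top (ENNReal.rpow_lt_top_of_nonneg hd ENNReal.coe_ne_top) hs)

lemma hausdorffMeasure_pos_of_lipschitzWith_image_mem_nhds {X : Type*} [EMetricSpace X]
    [MeasurableSpace X] [BorelSpace X] {n : ℕ} {π : X → Fin n → ℝ} {K : NNReal}
    (hπ : LipschitzWith K π) {s : Set X} {z : Fin n → ℝ} (hs : π '' s ∈ 𝓝 z) :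
    0 < μH[(n : ℝ)] s := by
  have himage : 0 < μH[(n : ℝ)] (π '' s) := by
    rw [hausdorffMeasure_fin_eq_volume]
    exact volume.measure_pos_of_mem_nhds hs
  refine pos_iff_ne_zero.2 fun hzero => himage.ne' ?_
  simpa [hzero] using hπ.hausdorffMeasure_image_le (Nat.cast_nonneg n) s

lemma IsCompact.integrableOn_of_continuousOn {X E : Type*} [TopologicalSpace X] [T2Space X]
    [MeasurableSpace X] [OpensMeasurableSpace X] [NormedAddCommGroup E] {μ : Measure X}
    {s : Set X} {f : X → E} (hs : IsCompact s) (hμ : μ s < ⊤) (hf : ContinuousOn f s) :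
    IntegrableOn f s μ := by
  obtain ⟨C, hC⟩ := hs.exists_bound_of_continuousOn hf
  exact ⟨hf.aestronglyMeasurable_of_isCompact hs hs.measurableSet,
    .restrict_of_bounded C hμ ((ae_restrict_iff' hs.measurableSet).2 (.of_forall hC))⟩

lemma setIntegral_pos_of_pos_on {X : Type*} [MeasurableSpace X] {μ : Measure X} {s : Set X}
    {f : X → ℝ} (hs : MeasurableSet s) (hμ : 0 < μ s) (hf : IntegrableOn f s μ)
    (hpos : ∀ x ∈ s, 0 < f x) : 0 < ∫ x in s, f x ∂μ := by
  rw [setIntegral_pos_iff_support_of_nonneg_ae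
    ((ae_restrict_iff' hs).2 (.of_forall fun x hx => (hpos x hx).le)) hf]
  exact hμ.trans_le (measure_mono fun x hx => ⟨(hpos x hx).ne', hx⟩)

lemma isLinearMap_setIntegral_div {X E : Type*} [MeasurableSpace X] [AddCommMonoid E]
    [Module ℝ E] {μ : Measure X} {s : Set X} {f : X → E → ℝ}
    (hf : ∀ x, IsLinearMap ℝ (f x)) (hint : ∀ u, IntegrableOn (fun x => f x u) s μ)
    (c : ℝ) :
    IsLinearMap ℝ fun u => (∫ x in s, f x u ∂μ) / c where
  map_add u w := by
    simp only [(hf _).map_add, integral_add (hint u) (hint w), add_div]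
  map_smul a u := by
    simp only [(hf _).map_smul, smul_eq_mul, integral_const_mul, mul_div_assoc]

lemma contDiff_finInsertNth {n : ℕ} {k : WithTop ℕ∞} (i : Fin (n + 1)) (ε : ℝ) :
    ContDiff ℝ k fun z : Fin n → ℝ => (Fin.insertNth i ε z : Fin (n + 1) → ℝ) :=
  contDiff_pi.2 fun j => Fin.succAboveCases i (by simpa using contDiff_const)
    (fun l => by simpa using contDiff_apply ℝ ℝ l) j

/-- `Fin.insertNth i ε '' closedBall 0 1` is the face `{x i = ε}` of the cube `[-1, 1]^(n+1)`. -/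
lemma exists_pos_smul_insertNth_eq {n : ℕ} {x : Fin (n + 1) → ℝ} (hx : x ≠ 0) :
    ∃ i : Fin (n + 1), ∃ ε ∈ ({1, -1} : Set ℝ), ∃ z ∈ closedBall (0 : Fin n → ℝ) 1,
      ∃ c : ℝ, 0 < c ∧ c • (Fin.insertNth i ε z : Fin (n + 1) → ℝ) = x := by
  obtain ⟨i, hi⟩ := Finite.exists_max fun j => |x j|
  have hc : 0 < |x i| := by
    by_contra! h
    exact hx (funext fun j => abs_nonpos_iff.1 ((hi j).trans h))
  refine ⟨i, (|x i|⁻¹ • x) i, ?_, i.removeNth (|x i|⁻¹ • x), ?_, |x i|, hc, ?_⟩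
  · rcases abs_choice (x i) with h | h <;> simp [h, abs_pos.1 hc]
  · rw [mem_closedBall_zero_iff, pi_norm_le_iff_of_nonneg zero_le_one]
    intro j
    simpa [Fin.removeNth, abs_mul, inv_mul_le_iff₀ hc] using hi (i.succAbove j)
  · rw [Fin.insertNth_self_removeNth, smul_inv_smul₀ hc.ne']

section FundTensor

variable {V : Type*} [NormedAddCommGroup V] [NormedSpace ℝ V] (F : V → ℝ) (y : V)

lemma isLinearMap_fundTensor_left (v : V) : IsLinearMap ℝ fun u => fundTensor F y u v where
  map_add _ _ := by simp [fundTensor, mul_add]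
  map_smul _ _ := by simp [fundTensor]; ring

lemma isLinearMap_fundTensor_right (u : V) : IsLinearMap ℝ fun v => fundTensor F y u v where
  map_add _ _ := by simp [fundTensor, mul_add]
  map_smul _ _ := by simp [fundTensor]; ring

end FundTensor

namespace IsMinkowskiNorm

section NormedSpace

variable {V : Type*} [NormedAddCommGroup V] [NormedSpace ℝ V] {F : V → ℝ}

lemma ne_zero_of_eq_one (hF : IsMinkowskiNorm F) {y : V} (hy : F y = 1) : y ≠ 0 := by
  rintro rfl
  simp [hF.map_zero] at hy

lemma exists_pos_mul_norm_le [FiniteDimensional ℝ V] [Nontrivial V] (hF : IsMinkowskiNorm F) :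
    ∃ a > 0, ∀ v, a * ‖v‖ ≤ F v := by
  obtain ⟨v₀, hv₀, hmin⟩ := (isCompact_sphere (0 : V) 1).exists_isMinOn
    (NormedSpace.sphere_nonempty.2 zero_le_one) hF.continuous.continuousOn
  refine ⟨F v₀, hF.pos v₀ (ne_zero_of_mem_unit_sphere ⟨v₀, hv₀⟩), fun v => ?_⟩
  rcases eq_or_ne v 0 with rfl | hv
  · simp [hF.map_zero]
  have hnorm : 0 < ‖v‖ := norm_pos_iff.2 hv
  calc F v₀ * ‖v‖ ≤ F (‖v‖⁻¹ • v) * ‖v‖ := by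
        gcongr
        exact hmin (mem_sphere_zero_iff_norm.2 (norm_smul_inv_norm hv))
    _ = F v := by rw [hF.homog _ (inv_pos.2 hnorm)]; field_simp

lemma isCompact_indicatrix [FiniteDimensional ℝ V] [Nontrivial V] (hF : IsMinkowskiNorm F) :
    IsCompact {y | F y = 1} := by
  obtain ⟨a, ha, hle⟩ := hF.exists_pos_mul_norm_le
  refine (isCompact_closedBall (0 : V) a⁻¹).of_isClosed_subset
    (isClosed_singleton.preimage hF.continuous) fun y (hy : F y = 1) => ?_
  rw [mem_closedBall_zero_iff, ← mul_one a⁻¹, le_inv_mul_iff₀ ha]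
  simpa [hy] using hle y

lemma contDiffOn_inv_smul (hF : IsMinkowskiNorm F) :
    ContDiffOn ℝ 1 (fun v => (F v)⁻¹ • v) {0}ᶜ :=
  ((hF.smooth.of_le one_le_two).inv fun v hv => (hF.pos v hv).ne').smul contDiffOn_id

lemma inv_smul_eq_of_smul_eq (hF : IsMinkowskiNorm F) {c : ℝ} (hc : 0 < c) {w y : V}
    (hy : F y = 1) (hwy : c • w = y) : (F w)⁻¹ • w = y := by
  have hFw : F w = c⁻¹ := by
    rw [← hwy, hF.homog c hc] at hy
    exact eq_inv_of_mul_eq_one_right hy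
  rw [hFw, inv_inv, hwy]

lemma continuousOn_fundTensor (hF : IsMinkowskiNorm F) (u v : V) :
    ContinuousOn (fun y => fundTensor F y u v) {0}ᶜ := by
  have hD2 : ContinuousOn (fderiv ℝ (fderiv ℝ fun u => F u ^ 2)) {0}ᶜ :=
    ((hF.smooth.pow 2).fderiv_of_isOpen isOpen_compl_singleton (by norm_num))
      |>.continuousOn_fderiv_of_isOpen isOpen_compl_singleton le_rfl
  exact continuousOn_const.mul ((hD2.clm_apply continuousOn_const).clm_apply continuousOn_const)

end NormedSpace

section EuclideanSpace

variable {n : ℕ} {F : EuclideanSpace ℝ (Fin (n + 1)) → ℝ}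

lemma indicatrix_subset_iUnion_image_closedBall (hF : IsMinkowskiNorm F) :
    {y | F y = 1} ⊆ ⋃ i : Fin (n + 1), ⋃ ε ∈ ({1, -1} : Set ℝ),
      ((fun v => (F v)⁻¹ • v) ∘
        fun z => WithLp.toLp 2 (Fin.insertNth i ε z : Fin (n + 1) → ℝ)) ''
          closedBall (0 : Fin n → ℝ) 1 := by
  intro y (hy : F y = 1)
  obtain ⟨i, ε, hε, z, hz, c, hc, hcz⟩ :=
    exists_pos_smul_insertNth_eq (x := WithLp.ofLp y) (by simpa using hF.ne_zero_of_eq_one hy)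
  simp only [mem_iUnion]
  refine ⟨i, ε, hε, z, hz, hF.inv_smul_eq_of_smul_eq hc hy ?_⟩
  rw [← WithLp.toLp_smul, hcz, WithLp.toLp_ofLp]

lemma hausdorffMeasure_indicatrix_lt_top (hF : IsMinkowskiNorm F) :
    μH[(n : ℝ)] {y | F y = 1} < ⊤ := by
  refine (measure_mono hF.indicatrix_subset_iUnion_image_closedBall).trans_lt
    ((measure_iUnion_fintype_le _ _).trans_lt (ENNReal.sum_lt_top.2 fun i _ =>
      measure_biUnion_lt_top (toFinite _) fun ε hε => ?_))
  have hface : MapsTo (fun z => WithLp.toLp 2 (Fin.insertNth i ε z : Fin (n + 1) → ℝ))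
      (closedBall 0 1) {0}ᶜ := by
    intro z _ hz
    have := congrFun (congrArg WithLp.ofLp (mem_singleton_iff.1 hz)) i
    rcases hε with rfl | rfl <;> simp at this
  exact hausdorffMeasure_image_lt_top_of_contDiffOn (Nat.cast_nonneg n)
    (hF.contDiffOn_inv_smul.comp
      (PiLp.contDiff_toLp.comp (contDiff_finInsertNth i ε)).contDiffOn hface)
    (convex_closedBall 0 1) (isCompact_closedBall 0 1)
    (by rw [hausdorffMeasure_fin_eq_volume]; exact measure_closedBall_lt_top)

lemma lipschitzWith_init_ofLp :
    LipschitzWith 1 fun y : EuclideanSpace ℝ (Fin (n + 1)) => Fin.init (WithLp.ofLp y) :=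
  LipschitzWith.of_dist_le_mul fun v w => by
    rw [NNReal.coe_one, one_mul]
    exact (dist_pi_le_iff dist_nonneg).2 fun j => PiLp.dist_apply_le v w j.castSucc

lemma image_init_indicatrix_mem_nhds (hF : IsMinkowskiNorm F) :
    (fun y => Fin.init (WithLp.ofLp y)) '' {y | F y = 1} ∈ 𝓝 (0 : Fin n → ℝ) := by
  obtain ⟨a, ha, hle⟩ := hF.exists_pos_mul_norm_le
  have hsnoc_zero : (Fin.snoc (0 : Fin n → ℝ) 0 : Fin (n + 1) → ℝ) = 0 :=
    funext fun j => Fin.lastCases (by simp) (fun k => by simp) j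
  have hsmall : ∀ᶠ z in 𝓝 0, F (WithLp.toLp 2 (Fin.snoc z 0)) < 1 :=
    (hF.continuous.comp ((PiLp.continuous_toLp 2 _).comp
      (continuous_id.finSnoc continuous_const))).continuousAt.eventually_lt
      continuousAt_const (by simp [Function.comp_def, hsnoc_zero, hF.map_zero])
  filter_upwards [hsmall] with z hz
  set w : EuclideanSpace ℝ (Fin (n + 1)) := WithLp.toLp 2 (Fin.snoc z a⁻¹)
  have hlarge : 1 ≤ F w :=
    calc 1 = a * a⁻¹ := (mul_inv_cancel₀ ha.ne').symm
      _ ≤ a * ‖w‖ := by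
        gcongr
        simpa [w, abs_of_pos ha] using PiLp.norm_apply_le w (Fin.last n)
      _ ≤ F w := hle w
  have hline : Continuous fun t : ℝ => F (WithLp.toLp 2 (Fin.snoc z t)) :=
    hF.continuous.comp ((PiLp.continuous_toLp 2 _).comp (continuous_const.finSnoc continuous_id))
  obtain ⟨t, -, ht⟩ :=
    intermediate_value_Icc (inv_pos.2 ha).le hline.continuousOn ⟨hz.le, hlarge⟩
  exact ⟨WithLp.toLp 2 (Fin.snoc z t), ht, by simp⟩

lemma hausdorffMeasure_indicatrix_pos (hF : IsMinkowskiNorm F) :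
    0 < μH[(n : ℝ)] {y | F y = 1} :=
  hausdorffMeasure_pos_of_lipschitzWith_image_mem_nhds lipschitzWith_init_ofLp
    hF.image_init_indicatrix_mem_nhds

end EuclideanSpace

end IsMinkowskiNorm

/-- averaged Riemannian metric, pointwise version: averaging the
fundamental tensor of a strongly convex Minkowski norm over its indicatrix, with respect
to the `(m-1)`-dimensional Hausdorff measure, yields an inner product on `ℝ^m`. -/
theorem averaged_metric_inner_product
    {m : ℕ} (hm : 2 ≤ m) (F : EuclideanSpace ℝ (Fin m) → ℝ)
    (hF : IsMinkowskiNorm F) :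
    let S : Set (EuclideanSpace ℝ (Fin m)) := {y | F y = 1}
    let lam : Measure (EuclideanSpace ℝ (Fin m)) := μH[(m : ℝ) - 1]
    let h : EuclideanSpace ℝ (Fin m) → EuclideanSpace ℝ (Fin m) → ℝ :=
      fun u v => (∫ y in S, fundTensor F y u v ∂lam) / (lam S).toReal
    0 < lam S ∧ lam S < ⊤ ∧
    (∀ u v : EuclideanSpace ℝ (Fin m),
        IntegrableOn (fun y => fundTensor F y u v) S lam) ∧
    (∀ u v, h u v = h v u) ∧
    (∀ v, IsLinearMap ℝ (fun u => h u v)) ∧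
    (∀ u, IsLinearMap ℝ (fun v => h u v)) ∧
    (∀ u : EuclideanSpace ℝ (Fin m), u ≠ 0 → 0 < h u u) := by
  obtain ⟨n, rfl⟩ : ∃ n, m = n + 1 := ⟨m - 1, by omega⟩
  intro S lam h
  have hlam : lam = μH[(n : ℝ)] := by simp [lam]
  have hS : IsCompact S := hF.isCompact_indicatrix
  have hS0 : S ⊆ {0}ᶜ := fun y hy => hF.ne_zero_of_eq_one hy
  have hpos : 0 < lam S := hlam ▸ hF.hausdorffMeasure_indicatrix_pos
  have hfin : lam S < ⊤ := hlam ▸ hF.hausdorffMeasure_indicatrix_lt_top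
  have hint : ∀ u v, IntegrableOn (fun y => fundTensor F y u v) S lam := fun u v =>
    hS.integrableOn_of_continuousOn hfin ((hF.continuousOn_fundTensor u v).mono hS0)
  refine ⟨hpos, hfin, hint, fun u v => ?_, fun v => ?_, fun u => ?_, fun u hu => ?_⟩
  · exact congrArg (· / _)
      (setIntegral_congr_fun hS.measurableSet fun y hy => hF.symm y (hS0 hy) u v)
  · exact isLinearMap_setIntegral_div (fun y => isLinearMap_fundTensor_left F y v)
      (fun u => hint u v) _
  · exact isLinearMap_setIntegral_div (fun y => isLinearMap_fundTensor_right F y u)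
      (fun v => hint u v) _
  · exact div_pos (setIntegral_pos_of_pos_on hS.measurableSet hpos (hint u u)
      fun y hy => hF.posdef y (hS0 hy) u hu) (ENNReal.toReal_pos hpos.ne' hfin.ne)
end
end
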